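/- Let G be a finite group, H ≤ G a subgroup, and M a G-module which is torsion-free as a ℤ-module. If the H-fixed points M^H coincide with the G-fixed points M^G, then the restriction map on group cohomology H¹(G, M) → H¹(H, M) is injective. -/

import Mathlib

/-!
If `f` is a 1-cocycle on the finite group `G`, summing the cocycle identity
`f (g * h) = g • f h + f g` over `h` gives `|G| • f g = N - g • N` with `N = ∑ h, f h`.
After subtracting a coboundary we may assume `f` vanishes on `H`; then `N` is `H`-fixed,
hence `G`-fixed, so `|G| • f = 0` and `f = 0` because `M` is torsion-free.
-/

namespace groupCohomology

variable {G A : Type*} [Group G] [AddCommGroup A] [DistribMulAction G A]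

theorem IsCocycle₁.sub_coboundary {f : G → A} (hf : IsCocycle₁ f) (x : A) :
    IsCocycle₁ fun g => f g - (g • x - x) := by
  intro g h
  simp only [hf g h, smul_sub, mul_smul]
  abel

theorem IsCocycle₁.card_smul_eq_sum_sub_smul_sum [Fintype G] {f : G → A} (hf : IsCocycle₁ f)
    (g : G) : (Fintype.card G : ℤ) • f g = ∑ h, f h - g • ∑ h, f h := by
  have hshift : ∑ h, f (g * h) = ∑ h, f h :=
    Fintype.sum_bijective (g * ·) (Group.mulLeft_bijective g) _ _ fun _ => rfl
  calc (Fintype.card G : ℤ) • f g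
      = ∑ h, (f (g * h) - g • f h) := by
        simp only [hf g, add_sub_cancel_left, Finset.sum_const, Finset.card_univ, natCast_zsmul]
    _ = ∑ h, f h - g • ∑ h, f h := by
        rw [Finset.sum_sub_distrib, hshift, Finset.smul_sum]

theorem IsCocycle₁.eq_zero_of_eq_zero_on_subgroup [Finite G] [NoZeroSMulDivisors ℤ A]
    (H : Subgroup G) (hfix : ∀ m : A, (∀ h ∈ H, h • m = m) → ∀ g : G, g • m = m)
    {f : G → A} (hf : IsCocycle₁ f) (hH : ∀ h ∈ H, f h = 0) (g : G) : f g = 0 := by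
  have : Fintype G := Fintype.ofFinite G
  have hN : ∀ g : G, g • ∑ h, f h = ∑ h, f h :=
    hfix _ fun h hh => by
      simpa [hH h hh, sub_eq_zero, eq_comm] using hf.card_smul_eq_sum_sub_smul_sum h
  have hcard : (Fintype.card G : ℤ) • f g = 0 := by
    rw [hf.card_smul_eq_sum_sub_smul_sum, hN, sub_self]
  exact (smul_eq_zero.mp hcard).resolve_left (by exact_mod_cast Fintype.card_ne_zero)

end groupCohomology

/-- Let `G` be a finite group, `H ≤ G` a subgroup, and `M` a `G`-module
which is torsion-free as a `ℤ`-module.  If `M^H = M^G`, then the restriction map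
`H¹(G, M) → H¹(H, M)` is injective: any `1`-cocycle on `G` whose restriction to `H`
is a coboundary is itself a coboundary. -/
theorem stmt4 {G : Type*} [Group G] [Finite G] (H : Subgroup G)
    {M : Type*} [AddCommGroup M] [DistribMulAction G M]
    [NoZeroSMulDivisors ℤ M]
    (hfix : ∀ m : M, (∀ h ∈ H, h • m = m) → ∀ g : G, g • m = m)
    (f : G → M) (hf : ∀ g g' : G, f (g * g') = f g + g • f g')
    (hres : ∃ m : M, ∀ h ∈ H, f h = h • m - m) :
    ∃ m : M, ∀ g : G, f g = g • m - m := by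
  obtain ⟨m, hm⟩ := hres
  have hcocycle : groupCohomology.IsCocycle₁ f := fun g g' => (hf g g').trans (add_comm _ _)
  refine ⟨m, fun g => sub_eq_zero.mp ?_⟩
  exact (hcocycle.sub_coboundary m).eq_zero_of_eq_zero_on_subgroup H hfix
    (fun h hh => sub_eq_zero.mpr (hm h hh)) g
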